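/- arXiv:2604.10936 — 4 statements merged into one kernel-verified Lean document; each statement's English description precedes it below -/
import Mathlib

section
/- Let $X$ be a finite-dimensional real normed vector space, $\overline{\alpha} > 0$, $\mathcal{A}: X \times X \to \mathbb{R}$ a bilinear form with $\mathcal{A}(u,u) \ge \overline{\alpha}\|u\|^2$, $\mathcal{B}: X^3 \to \mathbb{R}$ a trilinear form with $\mathcal{B}(\xi,\theta,\theta)=0$, and $L: X \to \mathbb{R}$ a linear functional with operator norm $\|L\|$. Suppose $\Psi^1, \Psi^2 \in X$ both satisfy $\mathcal{A}(\Psi^i, \Phi) + \mathcal{B}(\Psi^i, \Psi^i, \Phi) = L(\Phi)$ for all $\Phi \in X$, and suppose $\|\mathcal{B}\| \|L\| < \overline{\alpha}^2$, where $\|\mathcal{B}\|$ is the norm of the trilinear form. Then $\Psi^1 = \Psi^2$. -/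
/-- Uniqueness of the discrete solution under the smallness condition
`‖B‖ ‖L‖ < α²`. -/
theorem stmt_2 {X : Type*} [NormedAddCommGroup X] [NormedSpace ℝ X]
    [FiniteDimensional ℝ X]
    (α : ℝ) (hα : 0 < α)
    (A : X →ₗ[ℝ] X →ₗ[ℝ] ℝ) (hAcoer : ∀ u, α * ‖u‖ ^ 2 ≤ A u u)
    (B : X →ₗ[ℝ] X →ₗ[ℝ] X →ₗ[ℝ] ℝ)
    (hB0 : ∀ ξ θ, B ξ θ θ = 0)
    (CB : ℝ) (hBcont : ∀ a b c, |B a b c| ≤ CB * ‖a‖ * ‖b‖ * ‖c‖)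
    (L : X →L[ℝ] ℝ)
    (hsmall : CB * ‖L‖ < α ^ 2)
    (Ψ1 Ψ2 : X)
    (h1 : ∀ Φ, A Ψ1 Φ + B Ψ1 Ψ1 Φ = L Φ)
    (h2 : ∀ Φ, A Ψ2 Φ + B Ψ2 Ψ2 Φ = L Φ) :
    Ψ1 = Ψ2 := by
  set d := Ψ1 - Ψ2 with hd
  -- key identity: A d d + B d Ψ1 d = 0
  have key : A d d + B d Ψ1 d = 0 := by
    have e1 := h1 d
    have e2 := h2 d
    have hz : B Ψ2 d d = 0 := hB0 _ _
    simp only [hd, map_sub, LinearMap.sub_apply] at *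
    linarith
  -- stability: α * ‖Ψ1‖ ≤ ‖L‖
  have stab : α * ‖Ψ1‖ ^ 2 ≤ ‖L‖ * ‖Ψ1‖ := by
    have e1 := h1 Ψ1
    have hz : B Ψ1 Ψ1 Ψ1 = 0 := hB0 _ _
    have hL : L Ψ1 ≤ ‖L‖ * ‖Ψ1‖ := le_trans (le_abs_self _) (L.le_opNorm Ψ1)
    have := hAcoer Ψ1
    linarith
  by_contra hne
  have hdne : d ≠ 0 := sub_ne_zero.mpr hne
  have hdpos : 0 < ‖d‖ := norm_pos_iff.mpr hdne
  have hBle : -B d Ψ1 d ≤ CB * ‖d‖ * ‖Ψ1‖ * ‖d‖ := by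
    have := hBcont d Ψ1 d
    have := neg_abs_le (B d Ψ1 d)
    linarith
  have hcoer := hAcoer d
  -- α ‖d‖² ≤ CB ‖Ψ1‖ ‖d‖²
  have h3 : α * ‖d‖ ^ 2 ≤ CB * ‖Ψ1‖ * ‖d‖ ^ 2 := by
    nlinarith
  have hdsq : 0 < ‖d‖ ^ 2 := pow_pos hdpos 2
  have h4 : α ≤ CB * ‖Ψ1‖ := by
    nlinarith [hdsq]
  have hΨpos : 0 < ‖Ψ1‖ := by
    rcases (norm_nonneg Ψ1).eq_or_lt with h | h
    · rw [← h, mul_zero] at h4; linarith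
    · exact h
  have hCBpos : 0 < CB := by nlinarith
  have : α * ‖Ψ1‖ ≤ ‖L‖ := by
    nlinarith
  nlinarith
end

section
/- Let $X_D$ be a finite-dimensional real normed space, $\hat{\beta} > 0$, and let $\mathbb{A}: X_D \times X_D \to \mathbb{R}$ be a bilinear form satisfying the inf-sup condition: for every $\Theta \in X_D$ with $\|\Theta\| = 1$ there exists $\Phi \in X_D$ with $\|\Phi\| = 1$ and $\mathbb{A}(\Theta, \Phi) \ge \hat{\beta}$. Let $\mathcal{B}$ be a continuous trilinear form on $X_D$ with norm $\|\mathcal{B}\|$, and let $\delta_1, \delta_2 \in X_D$ be perturbation directions with $\|\delta_1\| + \|\delta_2\| \le \epsilon$. Then the perturbed bilinear form $\mathfrak{A}(\Theta, \Phi) := \mathbb{A}(\Theta, \Phi) - \mathcal{B}(\delta_1, \Theta, \Phi) - \mathcal{B}(\Theta, \delta_2, \Phi)$ satisfies the inf-sup condition with constant $\hat{\beta} - \|\mathcal{B}\|\epsilon$; in particular if $\epsilon \le \hat{\beta}/(2\|\mathcal{B}\|)$ then $\mathfrak{A}$ satisfies the inf-sup condition with constant $\hat{\beta}/2$. -/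
/-- Stability of the inf-sup condition under trilinear perturbations
(abstract version of Lemma 4.5). -/
theorem stmt_6 {X : Type*} [NormedAddCommGroup X] [NormedSpace ℝ X]
    [FiniteDimensional ℝ X]
    (betahat ε CB : ℝ) (hβ : 0 < betahat) (hCB : 0 < CB)
    (A : X →ₗ[ℝ] X →ₗ[ℝ] ℝ)
    (hinf : ∀ Θ : X, ‖Θ‖ = 1 → ∃ Φ : X, ‖Φ‖ = 1 ∧ betahat ≤ A Θ Φ)
    (B : X →ₗ[ℝ] X →ₗ[ℝ] X →ₗ[ℝ] ℝ)
    (hB : ∀ a b c, |B a b c| ≤ CB * ‖a‖ * ‖b‖ * ‖c‖)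
    (δ1 δ2 : X) (hδ : ‖δ1‖ + ‖δ2‖ ≤ ε) :
    (∀ Θ : X, ‖Θ‖ = 1 → ∃ Φ : X, ‖Φ‖ = 1 ∧
        betahat - CB * ε ≤ A Θ Φ - B δ1 Θ Φ - B Θ δ2 Φ) ∧
    (ε ≤ betahat / (2 * CB) → ∀ Θ : X, ‖Θ‖ = 1 → ∃ Φ : X, ‖Φ‖ = 1 ∧
        betahat / 2 ≤ A Θ Φ - B δ1 Θ Φ - B Θ δ2 Φ) := by
  have main : ∀ Θ : X, ‖Θ‖ = 1 → ∃ Φ : X, ‖Φ‖ = 1 ∧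
      betahat - CB * ε ≤ A Θ Φ - B δ1 Θ Φ - B Θ δ2 Φ := by
    intro Θ hΘ
    obtain ⟨Φ, hΦ, hA⟩ := hinf Θ hΘ
    refine ⟨Φ, hΦ, ?_⟩
    have h1 := hB δ1 Θ Φ
    have h2 := hB Θ δ2 Φ
    rw [hΘ, hΦ] at h1 h2
    have h1' : B δ1 Θ Φ ≤ CB * ‖δ1‖ := by
      have := (abs_le.mp h1).2; linarith
    have h2' : B Θ δ2 Φ ≤ CB * ‖δ2‖ := by
      have := (abs_le.mp h2).2; linarith
    nlinarith
  refine ⟨main, fun hε Θ hΘ => ?_⟩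
  obtain ⟨Φ, hΦ, h⟩ := main Θ hΘ
  have : CB * ε ≤ betahat / 2 := by
    have h3 : ε * CB ≤ betahat / 2 := by
      rw [div_mul_eq_div_div] at hε
      exact (le_div_iff₀ hCB).mp hε
    linarith [mul_comm CB ε]
  exact ⟨Φ, hΦ, by linarith⟩
end

section
/- Let $X$ be a finite-dimensional real normed space, $\mathcal{B}$ a continuous trilinear form on $X$ with norm $\|\mathcal{B}\|$, $\hat{\beta} > 0$, and $\mathfrak{A}$ a bilinear form on $X$ satisfying $\sup_{\|\Phi\|=1}\mathfrak{A}(\Theta,\Phi) \ge \frac{\hat{\beta}}{2}\|\Theta\|$ for all $\Theta$. Fix $P\Psi \in X$ and suppose $\mu: X \to X$ is defined so that for each $\Theta \in X$, $\mu(\Theta)$ is the unique element with $\mathfrak{A}(\mu(\Theta), \Phi) = L(\Phi) + \mathcal{B}(P\Psi, \Theta, \Phi) + \mathcal{B}(\Theta, P\Psi, \Phi) - \mathcal{B}(\Theta, \Theta, \Phi)$ for all $\Phi \in X$, where $L$ is a fixed linear functional. Then for all $\Theta^1, \Theta^2 \in X$: $\frac{\hat{\beta}}{2}\|\mu(\Theta^1)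 - \mu(\Theta^2)\| \le \|\mathcal{B}\| \, \|\Theta^1 - \Theta^2\| \, (\|\Theta^1 - P\Psi\| + \|\Theta^2 - P\Psi\|)$. -/
/-- Contraction estimate for the fixed-point map `μ` of the perturbed
linearized problem (quantitative content of Lemma 4.8). -/
theorem stmt_9 {X : Type*} [NormedAddCommGroup X] [NormedSpace ℝ X]
    [FiniteDimensional ℝ X]
    (CB betahat : ℝ) (hβ : 0 < betahat)
    (𝔄 : X →ₗ[ℝ] X →ₗ[ℝ] ℝ)
    (hinf : ∀ Θ : X, ∃ Φ : X, ‖Φ‖ ≤ 1 ∧ betahat / 2 * ‖Θ‖ ≤ 𝔄 Θ Φ)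
    (B : X →ₗ[ℝ] X →ₗ[ℝ] X →ₗ[ℝ] ℝ)
    (hB : ∀ a b c, |B a b c| ≤ CB * ‖a‖ * ‖b‖ * ‖c‖)
    (L : X →ₗ[ℝ] ℝ) (PΨ : X) (μ : X → X)
    (hμ : ∀ Θ Φ : X, 𝔄 (μ Θ) Φ =
        L Φ + B PΨ Θ Φ + B Θ PΨ Φ - B Θ Θ Φ) :
    ∀ Θ1 Θ2 : X,
      betahat / 2 * ‖μ Θ1 - μ Θ2‖ ≤
        CB * ‖Θ1 - Θ2‖ * (‖Θ1 - PΨ‖ + ‖Θ2 - PΨ‖) := by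
  intro Θ1 Θ2
  rcases subsingleton_or_nontrivial X with h | h
  · have hz : ∀ x : X, ‖x‖ = 0 := fun x => by rw [Subsingleton.elim x 0, norm_zero]
    simp [hz]
  · obtain ⟨a, ha⟩ := exists_ne (0 : X)
    have hapos : 0 < ‖a‖ := norm_pos_iff.mpr ha
    have hCB : 0 ≤ CB := by
      have h1 := hB a a a
      have h2 := abs_nonneg (B a a a)
      nlinarith [mul_pos hapos (mul_pos hapos hapos)]
    obtain ⟨Φ, hΦ1, hΦ2⟩ := hinf (μ Θ1 - μ Θ2)
    have key : 𝔄 (μ Θ1 - μ Θ2) Φ =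
        B (Θ2 - Θ1) (Θ1 - PΨ) Φ + B (Θ2 - PΨ) (Θ2 - Θ1) Φ := by
      simp only [map_sub, LinearMap.sub_apply, hμ]
      ring
    have hΦ0 : 0 ≤ ‖Φ‖ := norm_nonneg Φ
    have b1 := hB (Θ2 - Θ1) (Θ1 - PΨ) Φ
    have b2 := hB (Θ2 - PΨ) (Θ2 - Θ1) Φ
    have e1 : |B (Θ2 - Θ1) (Θ1 - PΨ) Φ| ≤ CB * ‖Θ2 - Θ1‖ * ‖Θ1 - PΨ‖ := by
      refine b1.trans ?_
      have : CB * ‖Θ2 - Θ1‖ * ‖Θ1 - PΨ‖ * ‖Φ‖ ≤ CB * ‖Θ2 - Θ1‖ * ‖Θ1 - PΨ‖ * 1 := by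
        apply mul_le_mul_of_nonneg_left hΦ1
        positivity
      linarith
    have e2 : |B (Θ2 - PΨ) (Θ2 - Θ1) Φ| ≤ CB * ‖Θ2 - PΨ‖ * ‖Θ2 - Θ1‖ := by
      refine b2.trans ?_
      have : CB * ‖Θ2 - PΨ‖ * ‖Θ2 - Θ1‖ * ‖Φ‖ ≤ CB * ‖Θ2 - PΨ‖ * ‖Θ2 - Θ1‖ * 1 := by
        apply mul_le_mul_of_nonneg_left hΦ1
        positivity
      linarith
    have hrev : ‖Θ2 - Θ1‖ = ‖Θ1 - Θ2‖ := norm_sub_rev _ _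
    have a1 := le_abs_self (B (Θ2 - Θ1) (Θ1 - PΨ) Φ)
    have a2 := le_abs_self (B (Θ2 - PΨ) (Θ2 - Θ1) Φ)
    rw [key] at hΦ2
    rw [hrev] at e1 e2
    nlinarith [e1, e2, a1, a2, hΦ2]
end

section
/- Let $X_D$ be a finite-dimensional real normed space, $\mathcal{A}$ a bilinear form with $\mathcal{A}(u,u) \ge \overline{\alpha}\|u\|^2$ ($\overline{\alpha} > 0$), $\mathcal{B}$ a trilinear form with $\mathcal{B}(\xi,\theta,\theta) = 0$ and norm $\|\mathcal{B}\|$, and $L$ a linear functional with norm $\|L\|$. Let $\Psi^1, \Psi^2$ solve $\mathcal{A}(\Psi^i,\Phi) + \mathcal{B}(\Psi^i,\Psi^i,\Phi) = L(\Phi)$ for all $\Phi$, and set $\widetilde{\Psi} = \Psi^1 - \Psi^2$. Then $(\overline{\alpha} - \|\mathcal{B}\|\|\Psi^1\|)\|\widetilde{\Psi}\|^2 \le 0$. -/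
/-- The key uniqueness inequality `(α - ‖B‖‖Ψ¹‖)‖Ψ̃‖² ≤ 0` for the
difference `Ψ̃ = Ψ¹ - Ψ²` of two discrete solutions (inequality (3.5)). -/
theorem stmt_16 {X : Type*} [NormedAddCommGroup X] [NormedSpace ℝ X]
    [FiniteDimensional ℝ X]
    (α : ℝ) (hα : 0 < α)
    (A : X →ₗ[ℝ] X →ₗ[ℝ] ℝ) (hAcoer : ∀ u, α * ‖u‖ ^ 2 ≤ A u u)
    (B : X →ₗ[ℝ] X →ₗ[ℝ] X →ₗ[ℝ] ℝ)
    (hB0 : ∀ ξ θ, B ξ θ θ = 0)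
    (CB : ℝ) (hBcont : ∀ a b c, |B a b c| ≤ CB * ‖a‖ * ‖b‖ * ‖c‖)
    (L : X →ₗ[ℝ] ℝ) (CL : ℝ) (hL : ∀ Φ, |L Φ| ≤ CL * ‖Φ‖)
    (Ψ1 Ψ2 : X)
    (h1 : ∀ Φ, A Ψ1 Φ + B Ψ1 Ψ1 Φ = L Φ)
    (h2 : ∀ Φ, A Ψ2 Φ + B Ψ2 Ψ2 Φ = L Φ) :
    (α - CB * ‖Ψ1‖) * ‖Ψ1 - Ψ2‖ ^ 2 ≤ 0 := by
  set w := Ψ1 - Ψ2 with hw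
  have key : A w w + B w Ψ1 w + B Ψ2 w w = 0 := by
    have e1 := h1 w
    have e2 := h2 w
    have : A w w + B w Ψ1 w + B Ψ2 w w
        = (A Ψ1 w + B Ψ1 Ψ1 w) - (A Ψ2 w + B Ψ2 Ψ2 w) := by
      simp only [hw, map_sub, LinearMap.sub_apply]
      ring
    rw [this, e1, e2]; ring
  have hB2 : B Ψ2 w w = 0 := hB0 Ψ2 w
  have hA : α * ‖w‖ ^ 2 ≤ A w w := hAcoer w
  have hBb : |B w Ψ1 w| ≤ CB * ‖w‖ * ‖Ψ1‖ * ‖w‖ := hBcont w Ψ1 w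
  have := abs_le.mp hBb
  nlinarith [this.1, this.2]
end
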